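/- arXiv:2210.03503 — 2 statements merged into one kernel-verified Lean document; each statement's English description precedes it below -/
import Mathlib

section
/- Let n ≥ 2 be an integer and let f be a continuous, not identically zero, positive definite function on ℝ that is n-divisible. If the essential support S_f = {x ∈ ℝ : f(x) ≠ 0} is connected, then there is exactly one g ∈ PD(ℝ) with g(x)^n = f(x) for all x ∈ ℝ, i.e., D_n(f) has exactly one element. -/
open Complex MeasureTheory Set Pointwise ComplexOrder

noncomputable section

/-- `f : ℝ → ℂ` is positive definite. -/
def IsPosDefFn (f : ℝ → ℂ) : Prop :=
  ∀ (m : ℕ) (x : Fin m → ℝ) (c : Fin m → ℂ),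
    0 ≤ ∑ j, ∑ k, f (x j - x k) * c j * (starRingEnd ℂ) (c k)

/-- `f ∈ PD(ℝ)`: continuous, not identically zero, positive definite. -/
def MemPD (f : ℝ → ℂ) : Prop :=
  Continuous f ∧ (∃ x, f x ≠ 0) ∧ IsPosDefFn f

/-- The essential support `S_f`. -/
def essSupp (f : ℝ → ℂ) : Set ℝ := {x | f x ≠ 0}

/-- `D_n(f) = {g ∈ PD(ℝ) : g^n = f}`. -/
def Dset (n : ℕ) (f : ℝ → ℂ) : Set (ℝ → ℂ) :=
  {g | MemPD g ∧ ∀ x, g x ^ n = f x}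

/-- The set of connected components of `S ⊆ ℝ`. -/
def comps (S : Set ℝ) : Set (Set ℝ) :=
  {C | ∃ x ∈ S, C = connectedComponentIn S x}

/-!
Two `n`-th roots `g, h ∈ PD(ℝ)` of `f` have the same zero set `ℝ \ S_f`, and their quotient
`h / g` is a continuous map from `S_f` into the finite, hence discrete, set of `n`-th roots of
unity. On the connected set `S_f` it is therefore constant, and it equals `1` at `0 ∈ S_f`
because `g 0` and `h 0` are both nonnegative reals with the same `n`-th power.
-/

theorem Complex.eq_of_pow_eq_pow_of_nonneg {a b : ℂ} (ha : 0 ≤ a) (hb : 0 ≤ b) {n : ℕ}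
    (hn : n ≠ 0) (h : a ^ n = b ^ n) : a = b := by
  obtain ⟨x, hx, rfl⟩ := RCLike.nonneg_iff_exists_ofReal.mp ha
  obtain ⟨y, hy, rfl⟩ := RCLike.nonneg_iff_exists_ofReal.mp hb
  have hxy : x ^ n = y ^ n := by exact_mod_cast h
  rw [(pow_left_inj₀ hx hy hn).mp hxy]

theorem IsPreconnected.eqOn_of_pow_eq_pow {X K : Type*} [TopologicalSpace X] [Field K]
    [TopologicalSpace K] [IsTopologicalDivisionRing K] [T1Space K] {S : Set X}
    (hS : IsPreconnected S) {g h : X → K} (hg : ContinuousOn g S) (hh : ContinuousOn h S)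
    {n : ℕ} (hn : n ≠ 0) (hpow : ∀ x ∈ S, g x ^ n = h x ^ n) (hg0 : ∀ x ∈ S, g x ≠ 0)
    {x₀ : X} (hx₀ : x₀ ∈ S) (heq : g x₀ = h x₀) : EqOn g h S := by
  have hroots : {z : K | z ^ n = 1}.Finite := by
    rw [← Polynomial.nthRootsFinset_toSet (Nat.pos_of_ne_zero hn)]
    exact Finset.finite_toSet _
  have hmaps : MapsTo (fun x => h x / g x) S {z : K | z ^ n = 1} := fun x hx => by
    simp only [mem_ofPred_eq, div_pow, ← hpow x hx, div_self (pow_ne_zero n (hg0 x hx))]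
  intro x hx
  have hconst := hS.constant_of_mapsTo hroots.isDiscrete (hh.div hg hg0) hmaps hx hx₀
  rw [Pi.div_apply, Pi.div_apply, ← heq, div_self (hg0 x₀ hx₀),
    div_eq_one_iff_eq (hg0 x hx)] at hconst
  exact hconst.symm

namespace IsPosDefFn

variable {f : ℝ → ℂ}

theorem map_zero_nonneg (hf : IsPosDefFn f) : 0 ≤ f 0 := by
  simpa using hf 1 ![0] ![1]

theorem two_point (hf : IsPosDefFn f) (t : ℝ) (c : ℂ) :
    0 ≤ f 0 + f (-t) * (starRingEnd ℂ) c + (f t * c + f 0 * c * (starRingEnd ℂ) c) := by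
  simpa [Fin.sum_univ_two, mul_comm, mul_assoc, mul_left_comm] using hf 2 ![0, t] ![1, c]

/-- With `f 0 = 0`, the two-point form `c ↦ f (-t) * conj c + f t * c` is nonnegative and
odd in `c`, hence zero; `c = 1` and `c = I` then give `f (-t) = -f t` and `f (-t) = f t`. -/
theorem eq_zero_of_map_zero (hf : IsPosDefFn f) (h0 : f 0 = 0) (t : ℝ) : f t = 0 := by
  have hform (c : ℂ) : f (-t) * (starRingEnd ℂ) c + f t * c = 0 := by
    have h₁ := hf.two_point t c
    have h₂ := hf.two_point t (-c)
    rw [h0] at h₁ h₂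
    rw [map_neg] at h₂
    refine le_antisymm (neg_nonneg.mp ?_) ?_
    · convert h₂ using 1; ring
    · convert h₁ using 1; ring
  have h₁ := hform 1
  have hI := hform I
  simp only [map_one, mul_one, conj_I] at h₁ hI
  have hodd : f (-t) = -f t := eq_neg_of_add_eq_zero_left h₁
  rw [hodd] at hI
  have : (2 * I) * f t = 0 := by linear_combination hI
  simpa [I_ne_zero] using this

end IsPosDefFn

theorem MemPD.map_zero_ne_zero {f : ℝ → ℂ} (hf : MemPD f) : f 0 ≠ 0 := fun h0 =>
  let ⟨t, ht⟩ := hf.2.1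
  ht (hf.2.2.eq_zero_of_map_zero h0 t)

namespace Dset

variable {n : ℕ} {f g h : ℝ → ℂ}

theorem apply_eq_zero_iff (hn : n ≠ 0) (hg : g ∈ Dset n f) (x : ℝ) : g x = 0 ↔ f x = 0 := by
  rw [← hg.2 x, pow_eq_zero_iff hn]

theorem zero_mem_essSupp (hn : n ≠ 0) (hg : g ∈ Dset n f) : (0 : ℝ) ∈ essSupp f :=
  (apply_eq_zero_iff hn hg 0).not.mp hg.1.map_zero_ne_zero

theorem map_zero_eq (hn : n ≠ 0) (hg : g ∈ Dset n f) (hh : h ∈ Dset n f) : g 0 = h 0 :=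
  Complex.eq_of_pow_eq_pow_of_nonneg hg.1.2.2.map_zero_nonneg hh.1.2.2.map_zero_nonneg hn
    ((hg.2 0).trans (hh.2 0).symm)

theorem subsingleton_of_isPreconnected (hn : n ≠ 0) (hS : IsPreconnected (essSupp f)) :
    (Dset n f).Subsingleton := by
  intro g hg h hh
  have hgS : ∀ x ∈ essSupp f, g x ≠ 0 := fun x hx => (apply_eq_zero_iff hn hg x).not.mpr hx
  have hS_eq : EqOn g h (essSupp f) :=
    hS.eqOn_of_pow_eq_pow hg.1.1.continuousOn hh.1.1.continuousOn hn
      (fun x _ => (hg.2 x).trans (hh.2 x).symm) hgS (zero_mem_essSupp hn hg)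
      (map_zero_eq hn hg hh)
  funext x
  by_cases hx : x ∈ essSupp f
  · exact hS_eq hx
  · have hfx : f x = 0 := not_not.mp hx
    rw [(apply_eq_zero_iff hn hg x).mpr hfx, (apply_eq_zero_iff hn hh x).mpr hfx]

end Dset

theorem Dset_unique_of_connected_general (n : ℕ) (hn : 2 ≤ n) (f : ℝ → ℂ)
    (hdiv : (Dset n f).Nonempty)
    (hconn : IsConnected (essSupp f)) :
    ∃! g : ℝ → ℂ, g ∈ Dset n f := by
  obtain ⟨g, hg⟩ := hdiv
  exact ⟨g, hg, fun h hh =>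
    Dset.subsingleton_of_isPreconnected (by omega) hconn.isPreconnected hh hg⟩

theorem Dset_unique_of_connected (n : ℕ) (hn : 2 ≤ n) (f : ℝ → ℂ)
    (hf : MemPD f) (hdiv : (Dset n f).Nonempty)
    (hconn : IsConnected (essSupp f)) :
    ∃! g : ℝ → ℂ, g ∈ Dset n f :=
  Dset_unique_of_connected_general n hn f hdiv hconn
end
end

section
/- Let f be a continuous, not identically zero, positive definite function on ℝ. Then the set of connected components of the essential support S_f = {x ∈ ℝ : f(x) ≠ 0} is either infinite, or finite of odd cardinality (i.e., there is k ∈ ℕ with exactly 2k−1 components). -/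
open Complex MeasureTheory Set Pointwise ComplexOrder

noncomputable section

/-- A positive definite function satisfies `f(-t) = conj (f t)`. -/
lemma pd_symm (f : ℝ → ℂ) (hpd : IsPosDefFn f) (t : ℝ) : f (-t) = (starRingEnd ℂ) (f t) := by
  have h1 := hpd 2 ![0, t] ![1, 1]
  have h2 := hpd 2 ![0, t] ![1, I]
  have h0 := hpd 1 ![0] ![1]
  simp [Fin.sum_univ_two, Fin.sum_univ_one, Complex.le_def] at h0 h1 h2
  apply Complex.ext <;> simp [Complex.conj_re, Complex.conj_im] <;> linarith [h0.2, h1.2, h2.2]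

/-- A positive definite function that is not identically zero has `f 0 ≠ 0`. -/
lemma pd_zero_ne (f : ℝ → ℂ) (hpd : IsPosDefFn f) (hne : ∃ x, f x ≠ 0) : f 0 ≠ 0 := by
  intro h00
  obtain ⟨t, ht⟩ := hne
  have hs := pd_symm f hpd t
  have h2 := hpd 2 ![0, t] ![1, -(starRingEnd ℂ) (f t)]
  simp [Fin.sum_univ_two, Complex.le_def, h00, hs] at h2
  have : Complex.normSq (f t) = 0 := by
    have := Complex.normSq_nonneg (f t)
    simp [Complex.normSq_apply] at this ⊢
    nlinarith [h2.1]
  exact ht (Complex.normSq_eq_zero.mp this)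

/-- A finite set with a fixed-point-free involution has even cardinality. -/
lemma even_card_of_invol {α : Type*} [DecidableEq α] (t : Finset α) (g : α → α)
    (hmem : ∀ x ∈ t, g x ∈ t) (hinv : ∀ x ∈ t, g (g x) = x) (hne : ∀ x ∈ t, g x ≠ x) :
    Even t.card := by
  induction t using Finset.strongInduction with
  | _ t ih =>
    rcases t.eq_empty_or_nonempty with rfl | ⟨a, ha⟩
    · simp
    · have hga : g a ∈ t := hmem a ha
      have hgane : g a ≠ a := hne a ha
      set t' := (t.erase a).erase (g a) with ht'
      have hsub : t' ⊂ t := by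
        refine Finset.ssubset_iff_of_subset ((Finset.erase_subset _ _).trans (Finset.erase_subset _ _)) |>.mpr ?_
        exact ⟨a, ha, by simp [ht']⟩
      have hmem' : ∀ x ∈ t', x ∈ t ∧ x ≠ a ∧ x ≠ g a := by
        intro x hx
        simp only [ht', Finset.mem_erase] at hx
        exact ⟨hx.2.2, hx.2.1, hx.1⟩
      have key : ∀ x ∈ t', g x ∈ t' := by
        intro x hx
        obtain ⟨hxt, hxa, hxga⟩ := hmem' x hx
        simp only [ht', Finset.mem_erase]
        refine ⟨?_, ?_, hmem x hxt⟩
        · intro h; exact hxa (by rw [← hinv x hxt, h, hinv a ha])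
        · intro h; exact hxga (by rw [← hinv x hxt, h])
      have hcard : t.card = t'.card + 2 := by
        have e1 : (t.erase a).card + 1 = t.card := Finset.card_erase_add_one ha
        have e2 : t'.card + 1 = (t.erase a).card :=
          Finset.card_erase_add_one (by simp [Finset.mem_erase, hgane, hga])
        omega
      obtain ⟨k, hk⟩ := ih t' hsub (fun x hx => key x hx) (fun x hx => hinv x (hmem' x hx).1)
        (fun x hx => hne x (hmem' x hx).1)
      exact ⟨k + 1, by omega⟩

/-- Negation maps connected components of a symmetric set to connected components. -/
lemma neg_connectedComponentIn (S : Set ℝ) (hsym : ∀ x ∈ S, -x ∈ S) {x : ℝ} (hx : x ∈ S) :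
    -(connectedComponentIn S x) = connectedComponentIn S (-x) := by
  have hSneg : (Homeomorph.neg ℝ) '' S = S := by
    ext y; simp only [Homeomorph.neg, Equiv.neg, Set.mem_image]
    constructor
    · rintro ⟨z, hz, rfl⟩; exact hsym z hz
    · intro hy; exact ⟨-y, hsym y hy, show -(-y) = y from neg_neg y⟩
  have him := (Homeomorph.neg ℝ).image_connectedComponentIn (s := S) hx
  rw [hSneg] at him
  have hnx : (Homeomorph.neg ℝ) x = -x := rfl
  rw [hnx] at him
  rw [← him]
  ext y
  simp only [Set.mem_neg, Set.mem_image]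
  constructor
  · intro hy; exact ⟨-y, hy, show -(-y) = y from neg_neg y⟩
  · rintro ⟨z, hz, hzy⟩
    have : z = -y := by
      have h' : -z = y := hzy
      linarith
    rwa [← this]

/-- For a symmetric set `S ∋ 0`, the set of connected components is infinite or odd in number. -/
lemma key_comps_lemma (S : Set ℝ) (h0 : (0:ℝ) ∈ S) (hsym : ∀ x ∈ S, -x ∈ S) :
    (comps S).Infinite ∨ ∃ k : ℕ, 0 < k ∧ (comps S).ncard = 2 * k - 1 := by
  classical
  rcases (comps S).finite_or_infinite with hfin | hinf
  swap
  · exact Or.inl hinf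
  right
  set C0 := connectedComponentIn S 0 with hC0
  have hC0mem : C0 ∈ comps S := ⟨0, h0, rfl⟩
  have hNmem : ∀ C ∈ comps S, -C ∈ comps S := by
    rintro C ⟨x, hx, rfl⟩
    exact ⟨-x, hsym x hx, neg_connectedComponentIn S hsym hx⟩
  have hNinv : ∀ C ∈ comps S, -(-C) = C := fun C _ => neg_neg C
  have hfix : ∀ C ∈ comps S, -C = C → C = C0 := by
    rintro C ⟨x, hx, rfl⟩ hCeq
    have hxC : x ∈ connectedComponentIn S x := mem_connectedComponentIn hx
    have hnxC : -x ∈ connectedComponentIn S x := by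
      rw [← hCeq]; simpa using hxC
    have hconn : IsPreconnected (connectedComponentIn S x) := isPreconnected_connectedComponentIn
    have hord : (connectedComponentIn S x).OrdConnected := hconn.ordConnected
    have h0C : (0:ℝ) ∈ connectedComponentIn S x := by
      rcases le_total x 0 with h | h
      · exact hord.out hxC hnxC ⟨h, by linarith⟩
      · exact hord.out hnxC hxC ⟨by linarith, h⟩
    rw [hC0, connectedComponentIn_eq h0C]
  have hNC0 : -C0 = C0 := by
    have := neg_connectedComponentIn S hsym h0
    simpa [hC0] using this
  set t := hfin.toFinset with ht
  have hC0t : C0 ∈ t := by simp [ht, hC0mem]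
  have heven : Even (t.erase C0).card := by
    apply even_card_of_invol (t.erase C0) (fun C => -C)
    · intro C hC
      simp only [Finset.mem_erase, ht, Set.Finite.mem_toFinset] at hC ⊢
      refine ⟨?_, hNmem C hC.2⟩
      intro h
      exact hC.1 (by rw [← hNinv C hC.2, h, hNC0])
    · intro C hC
      simp only [Finset.mem_erase, ht, Set.Finite.mem_toFinset] at hC
      exact hNinv C hC.2
    · intro C hC
      simp only [Finset.mem_erase, ht, Set.Finite.mem_toFinset] at hC
      intro h
      exact hC.1 (hfix C hC.2 h)
  obtain ⟨m, hm⟩ := heven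
  have hcard : t.card = 2 * m + 1 := by
    rw [← Finset.card_erase_add_one hC0t]; omega
  refine ⟨m + 1, Nat.succ_pos m, ?_⟩
  rw [Set.ncard_eq_toFinset_card _ hfin, ← ht]
  omega

theorem comps_essSupp_infinite_or_odd (f : ℝ → ℂ) (hf : MemPD f) :
    (comps (essSupp f)).Infinite ∨
      ∃ k : ℕ, 0 < k ∧ (comps (essSupp f)).ncard = 2 * k - 1 := by
  obtain ⟨hcont, hne, hpd⟩ := hf
  apply key_comps_lemma
  · exact pd_zero_ne f hpd hne
  · intro x hx
    simp only [essSupp, Set.mem_setOf_eq] at hx ⊢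
    rw [pd_symm f hpd x]
    simpa using hx
end
end
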